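/- arXiv:2110.04072 — 7 statements merged into one kernel-verified Lean document; each statement's English description precedes it below -/
import Mathlib

section
/- Let A and B be Banach algebras, η ≥ 0, and ψ : A → B a linear map which is η-multiplicative. If b, c ∈ A satisfy bc = b and ‖ψ(c)‖ ≤ 1/3, then ‖ψ(b)‖ ≤ (3/2)η‖b‖‖c‖. -/
theorem stmt2 {A B : Type*} [NonUnitalNormedRing A] [NormedSpace ℂ A] [CompleteSpace A]
    [NonUnitalNormedRing B] [NormedSpace ℂ B] [CompleteSpace B]
    (η : ℝ) (hη : 0 ≤ η) (ψ : A →ₗ[ℂ] B)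
    (hmult : ∀ a b : A, ‖ψ (a * b) - ψ a * ψ b‖ ≤ η * ‖a‖ * ‖b‖)
    (b c : A) (hbc : b * c = b) (hc : ‖ψ c‖ ≤ 1 / 3) :
    ‖ψ b‖ ≤ (3 / 2) * η * ‖b‖ * ‖c‖ := by
  have h1 : ‖ψ (b * c) - ψ b * ψ c‖ ≤ η * ‖b‖ * ‖c‖ := hmult b c
  rw [hbc] at h1
  have h2 : ‖ψ b‖ ≤ ‖ψ b - ψ b * ψ c‖ + ‖ψ b * ψ c‖ := by
    calc ‖ψ b‖ = ‖(ψ b - ψ b * ψ c) + ψ b * ψ c‖ := by rw [sub_add_cancel]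
    _ ≤ _ := norm_add_le _ _
  have h3 : ‖ψ b * ψ c‖ ≤ ‖ψ b‖ * (1/3) := by
    calc ‖ψ b * ψ c‖ ≤ ‖ψ b‖ * ‖ψ c‖ := norm_mul_le _ _
    _ ≤ ‖ψ b‖ * (1/3) := by
        exact mul_le_mul_of_nonneg_left hc (norm_nonneg _)
  nlinarith [norm_nonneg (ψ b)]
end

section
/- Let A and B be Banach algebras with A unital (and ‖1_A‖ = 1). Let ψ : A → B be a linear map which is η-multiplicative for some η ≥ 0. If ‖ψ(1_A)‖ ≤ 1/3, then ψ is bounded with ‖ψ‖ ≤ 3η/2, i.e. ‖ψ(a)‖ ≤ (3η/2)‖a‖ for all a ∈ A. -/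
theorem stmt3 {A B : Type*} [NormedRing A] [NormedAlgebra ℂ A] [NormOneClass A] [CompleteSpace A]
    [NonUnitalNormedRing B] [NormedSpace ℂ B] [CompleteSpace B]
    (η : ℝ) (hη : 0 ≤ η) (ψ : A →ₗ[ℂ] B)
    (hmult : ∀ a b : A, ‖ψ (a * b) - ψ a * ψ b‖ ≤ η * ‖a‖ * ‖b‖)
    (h1 : ‖ψ 1‖ ≤ 1 / 3) :
    ∀ a : A, ‖ψ a‖ ≤ (3 * η / 2) * ‖a‖ := by
  intro a
  have h := hmult a 1
  rw [mul_one, norm_one, mul_one] at h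
  have h2 : ‖ψ a‖ ≤ ‖ψ a - ψ a * ψ 1‖ + ‖ψ a * ψ 1‖ := by
    calc ‖ψ a‖ = ‖(ψ a - ψ a * ψ 1) + ψ a * ψ 1‖ := by rw [sub_add_cancel]
    _ ≤ _ := norm_add_le _ _
  have h3 : ‖ψ a * ψ 1‖ ≤ ‖ψ a‖ * (1/3) := le_trans (norm_mul_le _ _)
    (mul_le_mul_of_nonneg_left h1 (norm_nonneg _))
  nlinarith [norm_nonneg (ψ a)]
end

section
/- Let A and B be Banach algebras, and let u, v ∈ A be such that uv and vu are idempotents. Let ψ : A → B be a linear map which is η-multiplicative, where η ≥ 0 satisfies η‖u‖³‖v‖³ ≤ 2/9. If ‖ψ(uv)‖ ≤ 1/3, then ‖ψ(vu)‖ ≤ 1/3. -/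
theorem stmt4 {A B : Type*} [NonUnitalNormedRing A] [NormedSpace ℂ A] [CompleteSpace A]
    [NonUnitalNormedRing B] [NormedSpace ℂ B] [CompleteSpace B]
    (u v : A) (huv : (u * v) * (u * v) = u * v) (hvu : (v * u) * (v * u) = v * u)
    (η : ℝ) (hη0 : 0 ≤ η) (hη : η * ‖u‖ ^ 3 * ‖v‖ ^ 3 ≤ 2 / 9)
    (ψ : A →ₗ[ℂ] B)
    (hmult : ∀ a b : A, ‖ψ (a * b) - ψ a * ψ b‖ ≤ η * ‖a‖ * ‖b‖)
    (h : ‖ψ (u * v)‖ ≤ 1 / 3) :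
    ‖ψ (v * u)‖ ≤ 1 / 3 := by
  by_cases hzero : v * u = 0
  · rw [hzero, map_zero, norm_zero]; norm_num
  -- since v*u is a nonzero idempotent, its norm is at least 1
  have hMN : 1 ≤ ‖u‖ * ‖v‖ := by
    have h1 : ‖v * u‖ ≤ ‖v * u‖ * ‖v * u‖ := by
      conv_lhs => rw [← hvu]
      exact norm_mul_le _ _
    have h2 : (0:ℝ) < ‖v * u‖ := norm_pos_iff.mpr hzero
    have h3 : ‖v * u‖ ≤ ‖v‖ * ‖u‖ := norm_mul_le _ _
    nlinarith
  set a : A := u * v * u with ha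
  set b : A := v * u * v with hb
  have hea : (u * v) * a = a := by
    rw [ha]
    calc (u*v) * (u*v*u) = ((u*v)*(u*v))*u := by noncomm_ring
    _ = (u*v)*u := by rw [huv]
  have hbe : b * (u * v) = b := by
    rw [hb]
    calc (v*u*v) * (u*v) = v*((u*v)*(u*v)) := by noncomm_ring
    _ = v*(u*v) := by rw [huv]
    _ = v*u*v := by noncomm_ring
  have hba : b * a = v * u := by
    rw [ha, hb]
    calc (v*u*v) * (u*v*u) = ((v*u)*(v*u))*(v*u) := by noncomm_ring
    _ = v*u := by rw [hvu, hvu]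
  have hna : ‖a‖ ≤ ‖u‖ * ‖v‖ * ‖u‖ := by
    calc ‖a‖ ≤ ‖u*v‖ * ‖u‖ := norm_mul_le _ _
    _ ≤ (‖u‖*‖v‖) * ‖u‖ :=
        mul_le_mul_of_nonneg_right (norm_mul_le u v) (norm_nonneg u)
  have hnb : ‖b‖ ≤ ‖v‖ * ‖u‖ * ‖v‖ := by
    calc ‖b‖ ≤ ‖v*u‖ * ‖v‖ := norm_mul_le _ _
    _ ≤ (‖v‖*‖u‖) * ‖v‖ :=
        mul_le_mul_of_nonneg_right (norm_mul_le v u) (norm_nonneg v)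
  have hne : ‖u*v‖ ≤ ‖u‖*‖v‖ := norm_mul_le u v
  -- key bound on ψ a : since (u*v)*a = a and ‖ψ(u*v)‖ ≤ 1/3
  have hψa : ‖ψ a‖ ≤ (3/2) * (η * ‖u*v‖ * ‖a‖) := by
    have h1 := hmult (u*v) a
    rw [hea] at h1
    have h3 : ‖ψ (u*v) * ψ a‖ ≤ (1/3) * ‖ψ a‖ := by
      calc ‖ψ (u*v) * ψ a‖ ≤ ‖ψ (u*v)‖ * ‖ψ a‖ := norm_mul_le _ _
      _ ≤ (1/3) * ‖ψ a‖ := mul_le_mul_of_nonneg_right h (norm_nonneg _)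
    have h4 := norm_sub_norm_le (ψ a) (ψ (u*v) * ψ a)
    linarith
  have hψb : ‖ψ b‖ ≤ (3/2) * (η * ‖b‖ * ‖u*v‖) := by
    have h1 := hmult b (u*v)
    rw [hbe] at h1
    have h3 : ‖ψ b * ψ (u*v)‖ ≤ (1/3) * ‖ψ b‖ := by
      calc ‖ψ b * ψ (u*v)‖ ≤ ‖ψ b‖ * ‖ψ (u*v)‖ := norm_mul_le _ _
      _ ≤ ‖ψ b‖ * (1/3) := mul_le_mul_of_nonneg_left h (norm_nonneg _)
      _ = (1/3) * ‖ψ b‖ := by ring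
    have h4 := norm_sub_norm_le (ψ b) (ψ b * ψ (u*v))
    linarith
  -- ψ(v*u) is close to ψ b * ψ a
  have h5 := hmult b a
  rw [hba] at h5
  have h6 : ‖ψ (v*u)‖ ≤ ‖ψ b‖ * ‖ψ a‖ + η * ‖b‖ * ‖a‖ := by
    have h4 := norm_sub_norm_le (ψ (v*u)) (ψ b * ψ a)
    have h7 : ‖ψ b * ψ a‖ ≤ ‖ψ b‖ * ‖ψ a‖ := norm_mul_le _ _
    linarith
  -- now pure arithmetic
  set M : ℝ := ‖u‖ with hM
  set N : ℝ := ‖v‖ with hN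
  have hM0 : 0 ≤ M := norm_nonneg u
  have hN0 : 0 ≤ N := norm_nonneg v
  have hXY : ‖ψ b‖ * ‖ψ a‖ ≤
      ((3/2) * (η * (N*M*N) * (M*N))) * ((3/2) * (η * (M*N) * (M*N*M))) := by
    have hX' : ‖ψ a‖ ≤ (3/2) * (η * (M*N) * (M*N*M)) := by
      refine le_trans hψa ?_
      gcongr
    have hY' : ‖ψ b‖ ≤ (3/2) * (η * (N*M*N) * (M*N)) := by
      refine le_trans hψb ?_
      gcongr
    exact mul_le_mul hY' hX' (norm_nonneg _) (by positivity)
  have hD : η * ‖b‖ * ‖a‖ ≤ η * M^3 * N^3 := by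
    calc η * ‖b‖ * ‖a‖ ≤ η * (N*M*N) * (M*N*M) := by gcongr
    _ = η * M^3 * N^3 := by ring
  have hD0 : 0 ≤ η * M^3 * N^3 := by positivity
  have hkey : ((3/2) * (η * (N*M*N) * (M*N))) * ((3/2) * (η * (M*N) * (M*N*M)))
      ≤ (9/4) * (η * M^3 * N^3) * (η * M^3 * N^3) := by
    have e1 : ((3/2) * (η * (N*M*N) * (M*N))) * ((3/2) * (η * (M*N) * (M*N*M)))
        = (9/4) * (η^2 * M^5 * N^5) := by ring
    have e2 : (9/4) * (η * M^3 * N^3) * (η * M^3 * N^3)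
        = ((9/4) * (η^2 * M^5 * N^5)) * (M*N) := by ring
    rw [e1, e2]
    exact le_mul_of_one_le_right (by positivity) hMN
  have hsq : (9/4) * (η * M^3 * N^3) * (η * M^3 * N^3) ≤ (1/2) * (η * M^3 * N^3) := by
    nlinarith [hD0, hη]
  linarith
end

section
/- Let A and B be Banach algebras and let p ∈ A be an idempotent (p² = p). Let δ ≥ 0 satisfy δ‖p‖² ≤ 2/9, and suppose ψ : A → B is a bounded linear map which is δ-multiplicative. Then either ‖ψ(p)‖ ≤ (3/2)‖p‖²δ ≤ 1/3, or ‖ψ(p)‖ ≥ 1 − (3/2)‖p‖²δ ≥ 2/3. -/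
theorem stmt6 {A B : Type*} [NonUnitalNormedRing A] [NormedSpace ℂ A] [CompleteSpace A]
    [NonUnitalNormedRing B] [NormedSpace ℂ B] [CompleteSpace B]
    (p : A) (hp : p * p = p)
    (δ : ℝ) (hδ0 : 0 ≤ δ) (hδ : δ * ‖p‖ ^ 2 ≤ 2 / 9)
    (ψ : A →L[ℂ] B)
    (hmult : ∀ a b : A, ‖ψ (a * b) - ψ a * ψ b‖ ≤ δ * ‖a‖ * ‖b‖) :
    (‖ψ p‖ ≤ (3 / 2) * ‖p‖ ^ 2 * δ ∧ (3 / 2) * ‖p‖ ^ 2 * δ ≤ 1 / 3) ∨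
    (1 - (3 / 2) * ‖p‖ ^ 2 * δ ≤ ‖ψ p‖ ∧ 2 / 3 ≤ 1 - (3 / 2) * ‖p‖ ^ 2 * δ) := by
  set t := ‖ψ p‖ with ht
  have h0 : (0:ℝ) ≤ t := norm_nonneg _
  have hε : ‖ψ p - ψ p * ψ p‖ ≤ δ * ‖p‖ * ‖p‖ := by
    have := hmult p p
    rwa [hp] at this
  have h1 : t ≤ t ^ 2 + δ * ‖p‖ ^ 2 := by
    calc t = ‖ψ p * ψ p + (ψ p - ψ p * ψ p)‖ := by rw [add_sub_cancel]
    _ ≤ ‖ψ p * ψ p‖ + ‖ψ p - ψ p * ψ p‖ := norm_add_le _ _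
    _ ≤ t * t + δ * ‖p‖ * ‖p‖ := add_le_add (norm_mul_le _ _) hε
    _ = t ^ 2 + δ * ‖p‖ ^ 2 := by ring
  rcases le_or_gt t ((3/2) * ‖p‖ ^ 2 * δ) with h | h
  · exact Or.inl ⟨h, by nlinarith⟩
  · refine Or.inr ⟨le_of_not_gt fun h2 => ?_, by nlinarith⟩
    nlinarith [mul_pos (sub_pos.2 h) (sub_pos.2 h2), mul_nonneg hδ0 (sq_nonneg ‖p‖)]
end

section
/- Let Q be a Banach algebra containing an uncountable family Ω of pairwise orthogonal idempotents with sup_{p∈Ω} ‖p‖ ≤ L for some L ≥ 1. Let X be a separable Banach space, and suppose ψ : Q → B(X) is a bounded linear map which is η-multiplicative for some η > 0. Then ‖ψ(p)‖ ≤ 2ηL² for uncountably many p ∈ Ω. -/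
theorem stmt9 {Q : Type*} [NonUnitalNormedRing Q] [NormedSpace ℂ Q] [CompleteSpace Q]
    {X : Type*} [NormedAddCommGroup X] [NormedSpace ℂ X] [CompleteSpace X]
    [TopologicalSpace.SeparableSpace X]
    (Ω : Set Q) (hunc : ¬ Ω.Countable)
    (hidem : ∀ p ∈ Ω, p * p = p)
    (horth : ∀ p ∈ Ω, ∀ q ∈ Ω, p ≠ q → p * q = 0 ∧ q * p = 0)
    (L : ℝ) (hL1 : 1 ≤ L) (hL : ∀ p ∈ Ω, ‖p‖ ≤ L)
    (η : ℝ) (hη : 0 < η)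
    (ψ : Q →L[ℂ] (X →L[ℂ] X))
    (hmult : ∀ a b : Q, ‖ψ (a * b) - ψ a * ψ b‖ ≤ η * ‖a‖ * ‖b‖) :
    ¬ ({p ∈ Ω | ‖ψ p‖ ≤ 2 * η * L ^ 2}).Countable := by
  intro hS
  set S := {p ∈ Ω | ‖ψ p‖ ≤ 2 * η * L ^ 2} with hSdef
  have hL0 : (0:ℝ) < L := lt_of_lt_of_le one_pos hL1
  have hηL : (0:ℝ) < η * L ^ 2 := by positivity
  -- Ω \ S is uncountable
  have hBunc : ¬ (Ω \ S).Countable := by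
    intro h
    refine hunc ((hS.union h).mono fun p hp => ?_)
    by_cases hps : p ∈ S
    · exact Or.inl hps
    · exact Or.inr ⟨hp, hps⟩
  -- stratify by how much the norm exceeds 2ηL²
  set T : ℕ → Set Q := fun n => {p ∈ Ω \ S | 2*η*L^2 + ((n:ℝ)+1)⁻¹ ≤ ‖ψ p‖} with hTdef
  have hsub : Ω \ S ⊆ ⋃ n, T n := by
    intro p hp
    have hlt : 2*η*L^2 < ‖ψ p‖ := by
      by_contra hle
      exact hp.2 ⟨hp.1, le_of_not_gt hle⟩
    obtain ⟨m, hm⟩ := exists_nat_one_div_lt (sub_pos.2 hlt)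
    rw [one_div] at hm
    exact Set.mem_iUnion.2 ⟨m, hp, by linarith⟩
  obtain ⟨n, hTn⟩ : ∃ n, ¬ (T n).Countable := by
    by_contra h
    push_neg at h
    exact hBunc ((Set.countable_iUnion h).mono hsub)
  set ε : ℝ := ((n:ℝ)+1)⁻¹ with hεdef
  have hε : 0 < ε := by positivity
  set a : ℝ := 2*η*L^2 + ε/2 with hadef
  have ha0 : 0 < a := by positivity
  have hac : ∀ p ∈ T n, a < ‖ψ p‖ := fun p hp => by
    have := hp.2
    simp only [hadef]
    linarith
  -- choose almost-fixed unit vectors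
  have hxex : ∀ p, ∃ x : X, p ∈ T n → ‖x‖ < 1 ∧ a < ‖ψ p x‖ := by
    intro p
    by_cases hp : p ∈ T n
    · obtain ⟨x, h1, h2⟩ := (ψ p).exists_lt_apply_of_lt_opNorm (hac p hp)
      exact ⟨x, fun _ => ⟨h1, h2⟩⟩
    · exact ⟨0, fun h => absurd h hp⟩
  choose x hx using hxex
  set u : Q → X := fun p => ‖ψ p (x p)‖⁻¹ • ψ p (x p) with hudef
  -- approximate multiplicativity pointwise
  have key : ∀ p ∈ Ω, ∀ q ∈ Ω, ∀ v : X, ‖ψ (p*q) v - ψ p (ψ q v)‖ ≤ η * L^2 * ‖v‖ := by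
    intro p hp q hq v
    have h1 : ‖(ψ (p*q) - ψ p * ψ q) v‖ ≤ ‖ψ (p*q) - ψ p * ψ q‖ * ‖v‖ :=
      ContinuousLinearMap.le_opNorm _ _
    have h2 := hmult p q
    have hp2 : ‖p‖ * ‖q‖ ≤ L * L :=
      mul_le_mul (hL p hp) (hL q hq) (norm_nonneg q) hL0.le
    have h3 : η * ‖p‖ * ‖q‖ ≤ η * L^2 := by
      calc η * ‖p‖ * ‖q‖ = η * (‖p‖ * ‖q‖) := by ring
        _ ≤ η * (L * L) := mul_le_mul_of_nonneg_left hp2 hη.le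
        _ = η * L^2 := by ring
    calc ‖ψ (p*q) v - ψ p (ψ q v)‖ = ‖(ψ (p*q) - ψ p * ψ q) v‖ := by
          simp [ContinuousLinearMap.sub_apply, ContinuousLinearMap.mul_apply]
      _ ≤ ‖ψ (p*q) - ψ p * ψ q‖ * ‖v‖ := h1
      _ ≤ η * L^2 * ‖v‖ :=
          mul_le_mul_of_nonneg_right (h2.trans h3) (norm_nonneg v)
  have hnormu : ∀ p ∈ T n, ‖u p‖ = 1 := by
    intro p hp
    have hy : a < ‖ψ p (x p)‖ := (hx p hp).2
    have hy0 : ‖ψ p (x p)‖ ≠ 0 := (ha0.trans hy).ne'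
    show ‖‖ψ p (x p)‖⁻¹ • ψ p (x p)‖ = 1
    rw [norm_smul, norm_inv, norm_norm, inv_mul_cancel₀ hy0]
  -- Claim A : ψ p almost fixes u p
  have claimA : ∀ p ∈ T n, ‖ψ p (u p) - u p‖ ≤ η * L^2 / a := by
    intro p hp
    have hpΩ : p ∈ Ω := hp.1.1
    have hy : a < ‖ψ p (x p)‖ := (hx p hp).2
    have hy0 : (0:ℝ) < ‖ψ p (x p)‖ := lt_of_le_of_lt ha0.le hy
    have hkey := key p hpΩ p hpΩ (x p)
    rw [hidem p hpΩ] at hkey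
    have hx1 : ‖x p‖ ≤ 1 := (hx p hp).1.le
    have hbound : ‖ψ p (x p) - ψ p (ψ p (x p))‖ ≤ η * L^2 := by
      calc ‖ψ p (x p) - ψ p (ψ p (x p))‖ ≤ η * L^2 * ‖x p‖ := hkey
        _ ≤ η * L^2 := by nlinarith
    have hbound' : ‖ψ p (ψ p (x p)) - ψ p (x p)‖ ≤ η * L^2 := by
      rw [norm_sub_rev]; exact hbound
    have heq : ψ p (u p) - u p = ‖ψ p (x p)‖⁻¹ • (ψ p (ψ p (x p)) - ψ p (x p)) := by
      simp [hudef, map_smul, smul_sub]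
    rw [heq, norm_smul, norm_inv, norm_norm, div_eq_inv_mul]
    exact mul_le_mul (inv_anti₀ ha0 hy.le) hbound' (norm_nonneg _) (by positivity)
  -- Claim B : ψ p almost kills u q for q ≠ p
  have claimB : ∀ p ∈ T n, ∀ q ∈ T n, p ≠ q → ‖ψ p (u q)‖ ≤ η * L^2 / a := by
    intro p hp q hq hne
    have hpΩ : p ∈ Ω := hp.1.1
    have hqΩ : q ∈ Ω := hq.1.1
    have hy : a < ‖ψ q (x q)‖ := (hx q hq).2
    have hkey := key p hpΩ q hqΩ (x q)
    rw [(horth p hpΩ q hqΩ hne).1, map_zero] at hkey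
    simp only [ContinuousLinearMap.zero_apply, zero_sub, norm_neg] at hkey
    have hx1 : ‖x q‖ ≤ 1 := (hx q hq).1.le
    have hbound : ‖ψ p (ψ q (x q))‖ ≤ η * L^2 := by
      calc ‖ψ p (ψ q (x q))‖ ≤ η * L^2 * ‖x q‖ := hkey
        _ ≤ η * L^2 := by nlinarith
    have heq : ψ p (u q) = ‖ψ q (x q)‖⁻¹ • ψ p (ψ q (x q)) := by
      simp [hudef, map_smul]
    rw [heq, norm_smul, norm_inv, norm_norm, div_eq_inv_mul]
    apply mul_le_mul _ hbound (norm_nonneg _) (by positivity)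
    exact inv_anti₀ ha0 hy.le
  -- separation constant
  set M : ℝ := ‖ψ‖ * L + 1 with hMdef
  have hM0 : 0 < M := by positivity
  set δ0 : ℝ := 1 - 2 * (η * L^2) / a with hδ0def
  have hm : 2 * (η * L^2) / a < 1 := by
    rw [div_lt_one ha0]
    have hε2 : 0 < ε / 2 := by positivity
    simp only [hadef]
    linarith
  have hδ00 : 0 < δ0 := by
    rw [hδ0def]
    linarith
  set δ : ℝ := δ0 / M with hδdef
  have hδ0 : 0 < δ := by positivity
  have sep : ∀ p ∈ T n, ∀ q ∈ T n, p ≠ q → δ ≤ dist (u p) (u q) := by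
    intro p hp q hq hne
    have hpΩ : p ∈ Ω := hp.1.1
    have hA := claimA p hp
    have hB := claimB p hp q hq hne
    have h1 : δ0 ≤ ‖ψ p (u p - u q)‖ := by
      have h4 : u p = ψ p (u p - u q) - (ψ p (u p) - u p) + ψ p (u q) := by
        rw [map_sub]; abel
      have t : ‖u p‖ ≤ ‖ψ p (u p - u q)‖ + ‖ψ p (u p) - u p‖ + ‖ψ p (u q)‖ := by
        calc ‖u p‖ = ‖ψ p (u p - u q) - (ψ p (u p) - u p) + ψ p (u q)‖ := by rw [← h4]
          _ ≤ ‖ψ p (u p - u q) - (ψ p (u p) - u p)‖ + ‖ψ p (u q)‖ := norm_add_le _ _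
          _ ≤ ‖ψ p (u p - u q)‖ + ‖ψ p (u p) - u p‖ + ‖ψ p (u q)‖ := by
              linarith [norm_sub_le (ψ p (u p - u q)) (ψ p (u p) - u p)]
      have hnu := hnormu p hp
      have hsplit : 2 * (η * L^2) / a = η * L^2 / a + η * L^2 / a := by ring
      rw [hδ0def, hsplit]
      linarith
    have h2 : ‖ψ p (u p - u q)‖ ≤ M * ‖u p - u q‖ := by
      have hb : ‖ψ p‖ ≤ M := by
        have := (ψ : Q →L[ℂ] (X →L[ℂ] X)).le_opNorm p
        have hLp := hL p hpΩ
        have h0 := norm_nonneg ψ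
        calc ‖ψ p‖ ≤ ‖ψ‖ * ‖p‖ := this
          _ ≤ ‖ψ‖ * L := by nlinarith
          _ ≤ M := by rw [hMdef]; linarith
      calc ‖ψ p (u p - u q)‖ ≤ ‖ψ p‖ * ‖u p - u q‖ := ContinuousLinearMap.le_opNorm _ _
        _ ≤ M * ‖u p - u q‖ := mul_le_mul_of_nonneg_right hb (norm_nonneg _)
    rw [dist_eq_norm, hδdef, div_le_iff₀ hM0]
    calc δ0 ≤ ‖ψ p (u p - u q)‖ := h1
      _ ≤ M * ‖u p - u q‖ := h2
      _ = ‖u p - u q‖ * M := by ring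
  -- pairwise-disjoint balls ⇒ countable, contradiction
  refine hTn ?_
  apply Set.PairwiseDisjoint.countable_of_isOpen (s := fun p => Metric.ball (u p) (δ/2))
  · intro p hp q hq hne
    apply Metric.ball_disjoint_ball
    have := sep p hp q hq hne
    linarith
  · intro p _
    exact Metric.isOpen_ball
  · intro p _
    exact Metric.nonempty_ball.2 (by positivity)
end

section
/- Let A and B be Banach algebras, φ : A → B a bounded linear map, and define for each n ≥ 1 the operator d^n_φ from bounded n-linear maps Aⁿ → B to bounded (n+1)-linear maps by (d^n_φ ψ)(a₁,…,a_{n+1}) = φ(a₁)ψ(a₂,…,a_{n+1}) + Σ_{j=1}^{n} (−1)^j ψ(a₁,…,a_j a_{j+1},…,a_{n+1}) + (−1)^{n+1} ψ(a₁,…,a_n)φ(a_{n+1}). Then ‖d^{n+1}_φ ∘ d^n_φ‖ ≤ 4·def(φ), where def(φ) is the multiplicative defect of φ. -/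
set_option linter.unusedSectionVars false
set_option linter.unreachableTactic false
set_option linter.unusedTactic false
set_option linter.unnecessarySeqFocus false
set_option maxHeartbeats 1000000

noncomputable def mulDefect {A B : Type*} [NonUnitalNormedRing A] [NormedSpace ℂ A]
    [NonUnitalNormedRing B] [NormedSpace ℂ B] (ψ : A →L[ℂ] B) : ℝ :=
  sSup {x : ℝ | ∃ a b : A, ‖a‖ ≤ 1 ∧ ‖b‖ ≤ 1 ∧ x = ‖ψ (a * b) - ψ a * ψ b‖}

/-- The Hochschild-type coboundary operator `d^n_φ`, defined on raw functions,
with `φ` playing the role of the module action. -/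
noncomputable def cob {A B : Type*} [NonUnitalNormedRing A] [NormedSpace ℂ A]
    [NonUnitalNormedRing B] [NormedSpace ℂ B]
    (φ : A →L[ℂ] B) (n : ℕ) (f : (Fin n → A) → B) : (Fin (n + 1) → A) → B :=
  fun a =>
    φ (a 0) * f (Fin.tail a)
      + (∑ j : Fin n, ((-1 : ℂ) ^ ((j : ℕ) + 1)) •
          f (fun i : Fin n =>
              if (i : ℕ) < (j : ℕ) then a (Fin.castSucc i)
              else if i = j then a (Fin.castSucc i) * a i.succ
              else a i.succ))
      + ((-1 : ℂ) ^ (n + 1)) • (f (Fin.init a) * φ (a (Fin.last n)))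

section AuxCombinatorics

variable {A B : Type*} [NonUnitalNormedRing A] [NormedSpace ℂ A]
  [NonUnitalNormedRing B] [NormedSpace ℂ B]

def mrg {n : ℕ} (a : Fin (n + 1) → A) (j : Fin n) : Fin n → A :=
  fun i => if (i : ℕ) < (j : ℕ) then a (Fin.castSucc i)
    else if i = j then a (Fin.castSucc i) * a i.succ else a i.succ

lemma neg_one_pow_csmul (m : ℕ) (x : B) : ((-1 : ℂ) ^ m) • x = ((-1 : ℤ) ^ m) • x := by
  rw [show ((-1 : ℂ) ^ m) = (((-1 : ℤ) ^ m : ℤ) : ℂ) by push_cast; ring,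
    Int.cast_smul_eq_zsmul]

lemma cob_eq (φ : A →L[ℂ] B) (n : ℕ) (f : (Fin n → A) → B) (a : Fin (n + 1) → A) :
    cob φ n f a = φ (a 0) * f (Fin.tail a)
      + (∑ j : Fin n, ((-1 : ℤ) ^ ((j : ℕ) + 1)) • f (mrg a j))
      + ((-1 : ℤ) ^ (n + 1)) • (f (Fin.init a) * φ (a (Fin.last n))) := by
  simp only [cob, neg_one_pow_csmul]
  rfl

variable {n : ℕ} (a : Fin (n + 2) → A)

lemma aeq {p q : Fin (n + 2)} (h : (p : ℕ) = (q : ℕ)) : a p = a q := congrArg a (Fin.ext h)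

lemma tail_mrg_zero : Fin.tail (mrg a 0) = Fin.tail (Fin.tail a) := by
  funext i
  simp only [mrg, Fin.tail, Fin.ext_iff, Fin.val_succ, Fin.coe_castSucc, Fin.val_zero]
  split_ifs <;> first | omega | (cases ‹False›) | (apply aeq; simp) | (congr 1 <;> (apply aeq; simp))

lemma mrg_zero_zero : mrg a 0 0 = a 0 * a 1 := by
  simp only [mrg, Fin.ext_iff, Fin.val_succ, Fin.coe_castSucc, Fin.val_zero]
  split_ifs <;> first | omega | (cases ‹False›) | (congr 1 <;> (apply aeq; simp))

lemma mrg_succ_zero (j : Fin n) : mrg a j.succ 0 = a 0 := by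
  simp only [mrg, Fin.ext_iff, Fin.val_succ, Fin.coe_castSucc, Fin.val_zero]
  split_ifs <;> first | omega | (cases ‹False›) | (apply aeq; simp) | (congr 1 <;> (apply aeq; simp))

lemma tail_mrg_succ (j : Fin n) : Fin.tail (mrg a j.succ) = mrg (Fin.tail a) j := by
  funext i
  simp only [mrg, Fin.tail, Fin.ext_iff, Fin.val_succ, Fin.coe_castSucc]
  split_ifs <;> first | omega | (cases ‹False›) | (apply aeq; simp) | (congr 1 <;> (apply aeq; simp))

lemma init_tail_eq : Fin.init (Fin.tail a) = Fin.tail (Fin.init a) := by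
  funext i
  simp only [Fin.init, Fin.tail]
  apply aeq; simp

lemma mrg_castSucc_last (j : Fin n) :
    mrg a j.castSucc (Fin.last n) = a (Fin.last (n + 1)) := by
  simp only [mrg, Fin.ext_iff, Fin.val_succ, Fin.coe_castSucc, Fin.val_last]
  split_ifs <;> first | omega | (cases ‹False›) | (apply aeq; simp) | (congr 1 <;> (apply aeq; simp))

lemma init_mrg_castSucc (j : Fin n) :
    Fin.init (mrg a j.castSucc) = mrg (Fin.init a) j := by
  funext i
  simp only [mrg, Fin.init, Fin.ext_iff, Fin.val_succ, Fin.coe_castSucc]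
  split_ifs <;> first | omega | (cases ‹False›) | (apply aeq; simp) | (congr 1 <;> (apply aeq; simp))

lemma mrg_last_last :
    mrg a (Fin.last n) (Fin.last n) = a (Fin.last n).castSucc * a (Fin.last (n + 1)) := by
  simp only [mrg, Fin.ext_iff, Fin.val_succ, Fin.coe_castSucc, Fin.val_last]
  split_ifs <;> first | omega | (cases ‹False›) | (apply aeq; simp) | (congr 1 <;> (apply aeq; simp))

lemma init_mrg_last : Fin.init (mrg a (Fin.last n)) = Fin.init (Fin.init a) := by
  funext i
  simp only [mrg, Fin.init, Fin.ext_iff, Fin.val_succ, Fin.coe_castSucc, Fin.val_last]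
  split_ifs <;> first | omega | (cases ‹False›) | (apply aeq; simp) | (congr 1 <;> (apply aeq; simp))

lemma mrg_mrg (j : Fin (n + 1)) (k : Fin n) (h : (j : ℕ) ≤ (k : ℕ)) :
    mrg (mrg a j) k = mrg (mrg a k.succ) ⟨(j : ℕ), lt_of_le_of_lt h k.isLt⟩ := by
  funext i
  simp only [mrg, Fin.ext_iff, Fin.val_succ, Fin.coe_castSucc, Fin.val_last]
  split_ifs <;>
    first
    | omega
    | (apply aeq; simp; omega)
    | (congr 1 <;> first | (apply aeq; simp; omega) | (congr 1 <;> (apply aeq; simp; omega)))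
    | (rw [mul_assoc]; congr 1 <;> first | (apply aeq; simp; omega) | (congr 1 <;> (apply aeq; simp; omega)))

def invo {n : ℕ} (p : Fin (n + 1) × Fin n) : Fin (n + 1) × Fin n :=
  if h : (p.2 : ℕ) < (p.1 : ℕ) then
    (p.2.castSucc, ⟨(p.1 : ℕ) - 1, by have := p.2.isLt; have := p.1.isLt; omega⟩)
  else
    (p.2.succ, ⟨(p.1 : ℕ), by have := p.2.isLt; omega⟩)

lemma invo_of_lt {n : ℕ} {j : Fin (n + 1)} {k : Fin n} (h : (k : ℕ) < (j : ℕ))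
    {j' : Fin n} (hj' : (j' : ℕ) = (j : ℕ) - 1) : invo (j, k) = (k.castSucc, j') := by
  rw [invo, dif_pos (show (((j, k).2 : Fin n) : ℕ) < (((j, k).1 : Fin (n+1)) : ℕ) from h)]
  exact Prod.ext rfl (Fin.ext (by simp [hj']))

lemma invo_of_ge {n : ℕ} {j : Fin (n + 1)} {k : Fin n} (h : ¬ (k : ℕ) < (j : ℕ))
    {j' : Fin n} (hj' : (j' : ℕ) = (j : ℕ)) : invo (j, k) = (k.succ, j') := by
  rw [invo, dif_neg (show ¬ (((j, k).2 : Fin n) : ℕ) < (((j, k).1 : Fin (n+1)) : ℕ) from h)]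
  exact Prod.ext rfl (Fin.ext (by simp [hj']))

lemma invo_invo {n : ℕ} (p : Fin (n + 1) × Fin n) : invo (invo p) = p := by
  rcases p with ⟨j, k⟩
  have hk := k.isLt
  have hj := j.isLt
  by_cases h : (k : ℕ) < (j : ℕ)
  · obtain ⟨j', hj'⟩ : ∃ j' : Fin n, (j' : ℕ) = (j : ℕ) - 1 := ⟨⟨_, by omega⟩, rfl⟩
    rw [invo_of_lt h hj',
      invo_of_ge (by simp only [Fin.coe_castSucc]; omega) (j' := k) (by simp only [Fin.coe_castSucc])]
    exact Prod.ext (Fin.ext (by simp only [Fin.val_succ]; omega)) rfl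
  · have hx : (j : ℕ) < n := by omega
    obtain ⟨j', hj'⟩ : ∃ j' : Fin n, (j' : ℕ) = (j : ℕ) := ⟨⟨(j : ℕ), hx⟩, rfl⟩
    rw [invo_of_ge h hj',
      invo_of_lt (by simp only [Fin.val_succ]; omega) (j' := k) (by simp only [Fin.val_succ]; omega)]
    exact Prod.ext (Fin.ext (by simp only [Fin.coe_castSucc]; omega)) rfl

lemma invo_ne {n : ℕ} (p : Fin (n + 1) × Fin n) : invo p ≠ p := by
  rcases p with ⟨j, k⟩
  have hk := k.isLt
  have hj := j.isLt
  intro h1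
  have := congrArg (fun q : Fin (n+1) × Fin n => ((q.1 : Fin (n+1)) : ℕ)) h1
  by_cases h : (k : ℕ) < (j : ℕ)
  · rw [invo_of_lt h (j' := ⟨(j:ℕ)-1, by omega⟩) rfl] at this
    simp at this; omega
  · rw [invo_of_ge h (j' := ⟨(j:ℕ), by omega⟩) rfl] at this
    simp at this; omega


lemma double_sum_zero {n : ℕ} (a : Fin (n + 2) → A) (G : (Fin n → A) → B) :
    ∑ j : Fin (n + 1), ∑ k : Fin n,
      ((-1 : ℤ) ^ ((j : ℕ) + (k : ℕ))) • G (mrg (mrg a j) k) = 0 := by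
  rw [← Finset.sum_product']
  apply Finset.sum_involution (fun p _ => invo p)
  · intro p _
    rcases p with ⟨j, k⟩
    have hk := k.isLt
    have hj := j.isLt
    dsimp only
    by_cases h : (k : ℕ) < (j : ℕ)
    · obtain ⟨j', hj'⟩ : ∃ j' : Fin n, (j' : ℕ) = (j : ℕ) - 1 := ⟨⟨_, by omega⟩, rfl⟩
      rw [invo_of_lt h hj']
      have harg : mrg (mrg a (Fin.castSucc k)) j' = mrg (mrg a j) k := by
        rw [mrg_mrg a (Fin.castSucc k) j' (by simp only [Fin.coe_castSucc]; omega),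
          show ((j'.succ : Fin (n + 1))) = j from Fin.ext (by simp only [Fin.val_succ]; omega)]
        congr 1
        all_goals exact Fin.ext (by simp only [Fin.coe_castSucc])
      rw [harg, ← add_smul,
        show ((-1 : ℤ) ^ ((j : ℕ) + (k : ℕ))
          + (-1 : ℤ) ^ (((Fin.castSucc k : Fin (n+1)) : ℕ) + (j' : ℕ)) = 0) from by
            rw [show (j : ℕ) + (k : ℕ)
              = (((Fin.castSucc k : Fin (n+1)) : ℕ) + (j' : ℕ)) + 1 by
                simp only [Fin.coe_castSucc]; omega, pow_succ]
            ring,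
        zero_smul]
    · have hx : (j : ℕ) < n := by omega
      obtain ⟨j', hj'⟩ : ∃ j' : Fin n, (j' : ℕ) = (j : ℕ) := ⟨⟨(j : ℕ), hx⟩, rfl⟩
      rw [invo_of_ge h hj']
      have harg : mrg (mrg a j) k = mrg (mrg a k.succ) j' := by
        rw [mrg_mrg a j k (by omega)]
        exact congrArg (mrg (mrg a k.succ)) (Fin.ext (by simp; omega))
      rw [harg, ← add_smul,
        show ((-1 : ℤ) ^ ((j : ℕ) + (k : ℕ))
          + (-1 : ℤ) ^ (((k.succ : Fin (n+1)) : ℕ) + (j' : ℕ)) = 0) from by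
            rw [show (((k.succ : Fin (n+1)) : ℕ) + (j' : ℕ))
              = ((j : ℕ) + (k : ℕ)) + 1 by simp only [Fin.val_succ]; omega, pow_succ]
            ring,
        zero_smul]
  · exact fun p _ _ => invo_ne p
  · intro p _; exact Finset.mem_univ _
  · intro p _; exact invo_invo p

lemma cob_cob (φ : A →L[ℂ] B) (F : (Fin n → A) → B) :
    cob φ (n + 1) (cob φ n F) a
      = F (Fin.init (Fin.init a)) *
          (φ (a (Fin.last n).castSucc * a (Fin.last (n + 1)))
            - φ (a (Fin.last n).castSucc) * φ (a (Fin.last (n + 1))))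
        - (φ (a 0 * a 1) - φ (a 0) * φ (a 1)) * F (Fin.tail (Fin.tail a)) := by
  rw [cob_eq φ (n+1) (cob φ n F) a]
  -- chunk A
  have hA : φ (a 0) * cob φ n F (Fin.tail a)
      = (φ (a 0) * φ (a 1)) * F (Fin.tail (Fin.tail a))
        + (∑ k : Fin n, ((-1 : ℤ) ^ ((k : ℕ) + 1)) • (φ (a 0) * F (mrg (Fin.tail a) k)))
        + ((-1 : ℤ) ^ (n + 1)) •
            ((φ (a 0) * F (Fin.tail (Fin.init a))) * φ (a (Fin.last (n + 1)))) := by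
    rw [cob_eq φ n F (Fin.tail a),
      show Fin.tail a 0 = a 1 from congrArg a (Fin.ext (by simp)),
      show Fin.tail a (Fin.last n) = a (Fin.last (n + 1)) from congrArg a (Fin.succ_last n),
      init_tail_eq]
    simp only [mul_add, Finset.mul_sum, mul_smul_comm, mul_assoc]
  rw [hA]
  have hB : ∑ j : Fin (n+1), (-1:ℤ)^((j:ℕ)+1) • cob φ n F (mrg a j)
      = (∑ j : Fin (n+1), (-1:ℤ)^((j:ℕ)+1) • (φ ((mrg a j) 0) * F (Fin.tail (mrg a j))))
        + (∑ j : Fin (n+1), ∑ k : Fin n, (-1:ℤ)^((j:ℕ)+(k:ℕ)) • F (mrg (mrg a j) k))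
        + (∑ j : Fin (n+1), (-1:ℤ)^((j:ℕ)+n) •
            (F (Fin.init (mrg a j)) * φ ((mrg a j) (Fin.last n)))) := by
    rw [← Finset.sum_add_distrib, ← Finset.sum_add_distrib]
    apply Finset.sum_congr rfl
    intro j _
    rw [cob_eq φ n F (mrg a j), smul_add, smul_add, Finset.smul_sum]
    congr 1
    · congr 1
      apply Finset.sum_congr rfl; intro k _
      rw [smul_smul, ← pow_add,
        show ((j:ℕ)+1)+((k:ℕ)+1) = ((j:ℕ)+(k:ℕ))+2 by omega, pow_succ, pow_succ]
      norm_num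
    · rw [smul_smul, ← pow_add,
        show ((j:ℕ)+1)+(n+1) = ((j:ℕ)+n)+2 by omega, pow_succ, pow_succ]
      norm_num
  rw [hB]
  have hC : (-1:ℤ)^(n+1+1) • (cob φ n F (Fin.init a) * φ (a (Fin.last (n+1))))
      = (-1:ℤ)^(n+1+1) • ((φ (a 0) * F (Fin.tail (Fin.init a))) * φ (a (Fin.last (n+1))))
        + (∑ k : Fin n, (-1:ℤ)^((n+1+1)+((k:ℕ)+1)) •
            ((F (mrg (Fin.init a) k)) * φ (a (Fin.last (n+1)))))
        + (-1:ℤ)^((n+1+1)+(n+1)) •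
            ((F (Fin.init (Fin.init a)) * φ (a (Fin.last n).castSucc)) * φ (a (Fin.last (n+1)))) := by
    rw [cob_eq φ n F (Fin.init a),
      show Fin.init a 0 = a 0 from congrArg a (Fin.ext (by simp)),
      show Fin.init a (Fin.last n) = a (Fin.last n).castSucc from rfl]
    simp only [add_mul, Finset.sum_mul, smul_mul_assoc, smul_add, Finset.smul_sum, smul_smul,
      ← pow_add]
  rw [hC, double_sum_zero]
  have hU : (∑ j : Fin (n+1), (-1:ℤ)^((j:ℕ)+1) • (φ (mrg a j 0) * F (Fin.tail (mrg a j))))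
      = -(φ (a 0 * a 1) * F (Fin.tail (Fin.tail a)))
        + -(∑ k : Fin n, (-1:ℤ)^((k:ℕ)+1) • (φ (a 0) * F (mrg (Fin.tail a) k))) := by
    rw [Fin.sum_univ_succ]
    congr 1
    · rw [mrg_zero_zero, tail_mrg_zero]
      simp
    · rw [← Finset.sum_neg_distrib]
      apply Finset.sum_congr rfl
      intro k _
      rw [mrg_succ_zero, tail_mrg_succ, Fin.val_succ, pow_succ, mul_neg_one, neg_smul]
  rw [hU]
  have hW : (∑ j : Fin (n+1), (-1:ℤ)^((j:ℕ)+n) •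
        (F (Fin.init (mrg a j)) * φ (mrg a j (Fin.last n))))
      = -(∑ k : Fin n, (-1:ℤ)^(n+1+1+((k:ℕ)+1)) •
            (F (mrg (Fin.init a) k) * φ (a (Fin.last (n+1)))))
        + F (Fin.init (Fin.init a)) * φ (a (Fin.last n).castSucc * a (Fin.last (n+1))) := by
    rw [Fin.sum_univ_castSucc]
    congr 1
    · rw [← Finset.sum_neg_distrib]
      apply Finset.sum_congr rfl
      intro j _
      rw [init_mrg_castSucc, mrg_castSucc_last, Fin.coe_castSucc,
        show (-1:ℤ)^(n+1+1+((j:ℕ)+1)) = -(-1:ℤ)^((j:ℕ)+n) from by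
          rw [show n+1+1+((j:ℕ)+1) = ((j:ℕ)+n)+3 by omega, pow_add]; norm_num,
        neg_smul, neg_neg]
    · rw [init_mrg_last, mrg_last_last, Fin.val_last,
        show ((-1:ℤ))^(n+n) = 1 from Even.neg_one_pow ⟨n, rfl⟩, one_smul]
  rw [hW]
  have h3 : (-1:ℤ)^(n+1+1) • (φ (a 0) * F (Fin.tail (Fin.init a)) * φ (a (Fin.last (n+1))))
      = -((-1:ℤ)^(n+1) • (φ (a 0) * F (Fin.tail (Fin.init a)) * φ (a (Fin.last (n+1))))) := by
    rw [pow_succ, mul_neg_one, neg_smul]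
  rw [h3]
  have h4 : (-1:ℤ)^(n+1+1+(n+1)) •
        (F (Fin.init (Fin.init a)) * φ (a (Fin.last n).castSucc) * φ (a (Fin.last (n+1))))
      = -(F (Fin.init (Fin.init a)) * (φ (a (Fin.last n).castSucc) * φ (a (Fin.last (n+1))))) := by
    rw [show n+1+1+(n+1) = (n+n)+3 by omega, pow_add,
      show ((-1:ℤ))^(n+n) = 1 from Even.neg_one_pow ⟨n, rfl⟩, one_mul, mul_assoc]
    norm_num
  rw [h4, mul_sub, sub_mul]
  abel
end AuxCombinatorics

section Defect
variable {A B : Type*} [NonUnitalNormedRing A] [NormedSpace ℂ A]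
  [NonUnitalNormedRing B] [NormedSpace ℂ B] (φ : A →L[ℂ] B)

lemma ratsmul_key {C : Type*} [NonUnitalNormedRing C] [NormedSpace ℂ C] (q : ℚ) (z : C) :
    (q.den : ℤ) • ((q : ℂ) • z) = q.num • z := by
  rw [← Int.cast_smul_eq_zsmul ℂ ((q.den : ℤ)), smul_smul, ← Int.cast_smul_eq_zsmul ℂ q.num]
  congr 1
  have hd : ((q.den : ℂ)) ≠ 0 := by
    exact_mod_cast (Nat.cast_ne_zero (R := ℂ)).2 q.den_nz
  rw [Rat.cast_def]
  push_cast
  field_simp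

lemma ratsmul_mul {C : Type*} [NonUnitalNormedRing C] [NormedSpace ℂ C] (q : ℚ) (x y : C) :
    ((q : ℂ) • x) * y = (q : ℂ) • (x * y) := by
  have hd : (((q.den : ℤ) : ℂ)) ≠ 0 := by exact_mod_cast (Nat.cast_ne_zero (R := ℂ)).2 q.den_nz
  have h1 : (q.den : ℤ) • (((q : ℂ) • x) * y) = (q.den : ℤ) • ((q : ℂ) • (x * y)) := by
    calc (q.den : ℤ) • (((q : ℂ) • x) * y)
        = ((q.den : ℤ) • ((q : ℂ) • x)) * y := (smul_mul_assoc _ _ _).symm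
      _ = (q.num • x) * y := by rw [ratsmul_key]
      _ = q.num • (x * y) := smul_mul_assoc _ _ _
      _ = (q.den : ℤ) • ((q : ℂ) • (x * y)) := by rw [ratsmul_key]
  rw [← Int.cast_smul_eq_zsmul ℂ ((q.den : ℤ)), ← Int.cast_smul_eq_zsmul ℂ ((q.den : ℤ))] at h1
  exact smul_right_injective C hd h1

lemma mul_ratsmul {C : Type*} [NonUnitalNormedRing C] [NormedSpace ℂ C] (q : ℚ) (x y : C) :
    x * ((q : ℂ) • y) = (q : ℂ) • (x * y) := by
  have hd : (((q.den : ℤ) : ℂ)) ≠ 0 := by exact_mod_cast (Nat.cast_ne_zero (R := ℂ)).2 q.den_nz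
  have h1 : (q.den : ℤ) • (x * ((q : ℂ) • y)) = (q.den : ℤ) • ((q : ℂ) • (x * y)) := by
    calc (q.den : ℤ) • (x * ((q : ℂ) • y))
        = x * ((q.den : ℤ) • ((q : ℂ) • y)) := (mul_smul_comm _ _ _).symm
      _ = x * (q.num • y) := by rw [ratsmul_key]
      _ = q.num • (x * y) := (mul_smul_comm _ _ _)
      _ = (q.den : ℤ) • ((q : ℂ) • (x * y)) := by rw [ratsmul_key]
  rw [← Int.cast_smul_eq_zsmul ℂ ((q.den : ℤ)), ← Int.cast_smul_eq_zsmul ℂ ((q.den : ℤ))] at h1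
  exact smul_right_injective C hd h1

lemma delta_rat (q r : ℚ) (x y : A) :
    φ (((q : ℂ) • x) * ((r : ℂ) • y)) - φ ((q : ℂ) • x) * φ ((r : ℂ) • y)
      = ((q : ℂ) * (r : ℂ)) • (φ (x * y) - φ x * φ y) := by
  rw [ratsmul_mul, mul_ratsmul, map_smul, map_smul, map_smul, map_smul,
    ratsmul_mul, mul_ratsmul, smul_smul, smul_smul, ← smul_sub]

lemma mulDefect_bddAbove :
    BddAbove {x : ℝ | ∃ a b : A, ‖a‖ ≤ 1 ∧ ‖b‖ ≤ 1 ∧ x = ‖φ (a * b) - φ a * φ b‖} := by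
  refine ⟨‖φ‖ + ‖φ‖ * ‖φ‖, ?_⟩
  rintro z ⟨u, v, hu, hv, rfl⟩
  calc ‖φ (u * v) - φ u * φ v‖ ≤ ‖φ (u * v)‖ + ‖φ u * φ v‖ := norm_sub_le _ _
    _ ≤ ‖φ‖ * ‖u * v‖ + ‖φ u‖ * ‖φ v‖ := add_le_add (φ.le_opNorm _) (norm_mul_le _ _)
    _ ≤ ‖φ‖ + ‖φ‖ * ‖φ‖ := by
        have h1 := norm_mul_le u v
        have h2 := φ.le_opNorm u
        have h3 := φ.le_opNorm v
        have h4 : (0:ℝ) ≤ ‖φ‖ := norm_nonneg _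
        have h5 : (0:ℝ) ≤ ‖u‖ := norm_nonneg _
        have h6 : (0:ℝ) ≤ ‖v‖ := norm_nonneg _
        have h7 : (0:ℝ) ≤ ‖φ u‖ := norm_nonneg _
        have h8 : (0:ℝ) ≤ ‖φ v‖ := norm_nonneg _
        have h9 : (0:ℝ) ≤ ‖u * v‖ := norm_nonneg _
        have h10 : ‖u * v‖ ≤ 1 := le_trans h1 (by nlinarith)
        have h11 : ‖φ u‖ * ‖φ v‖ ≤ ‖φ‖ * ‖φ‖ := by nlinarith [mul_le_mul h2 h3 h8 (mul_nonneg h4 h5), mul_le_mul_of_nonneg_left hv (mul_nonneg h4 (mul_nonneg h4 h5)), mul_le_mul_of_nonneg_left hu (mul_nonneg h4 h4)]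
        have h12 : ‖φ‖ * ‖u * v‖ ≤ ‖φ‖ * 1 := by nlinarith
        linarith

lemma mem_defect_le (x y : A) (hx : ‖x‖ ≤ 1) (hy : ‖y‖ ≤ 1) :
    ‖φ (x * y) - φ x * φ y‖ ≤ mulDefect φ :=
  le_csSup (mulDefect_bddAbove φ) ⟨x, y, hx, hy, rfl⟩

lemma mulDefect_nonneg : 0 ≤ mulDefect φ := by
  have := mem_defect_le φ 0 0 (by simp) (by simp)
  have h0 : ‖φ ((0:A) * 0) - φ 0 * φ 0‖ = 0 := by simp
  linarith [this, h0.symm.le]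

lemma norm_ratCast_complex (q : ℚ) : ‖((q : ℂ))‖ = |(q : ℝ)| := by
  rw [show ((q : ℂ)) = (((q : ℝ) : ℂ)) by push_cast; ring]
  exact Complex.norm_real _

lemma defect_le (x y : A) :
    ‖φ (x * y) - φ x * φ y‖ ≤ mulDefect φ * (‖x‖ * ‖y‖) := by
  have key : ∀ q r : ℚ, ‖x‖ < (q : ℝ) → ‖y‖ < (r : ℝ) →
      ‖φ (x * y) - φ x * φ y‖ ≤ mulDefect φ * ((q : ℝ) * (r : ℝ)) := by
    intro q r hq hr
    have hq0 : (0:ℝ) < (q : ℝ) := lt_of_le_of_lt (norm_nonneg x) hq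
    have hr0 : (0:ℝ) < (r : ℝ) := lt_of_le_of_lt (norm_nonneg y) hr
    have hu : ‖((q⁻¹ : ℚ) : ℂ) • x‖ ≤ 1 := by
      rw [norm_smul, norm_ratCast_complex]
      push_cast
      rw [abs_of_pos (by positivity)]
      rw [inv_mul_le_iff₀ hq0, mul_one]
      exact hq.le
    have hv : ‖((r⁻¹ : ℚ) : ℂ) • y‖ ≤ 1 := by
      rw [norm_smul, norm_ratCast_complex]
      push_cast
      rw [abs_of_pos (by positivity)]
      rw [inv_mul_le_iff₀ hr0, mul_one]
      exact hr.le
    have hle := mem_defect_le φ _ _ hu hv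
    rw [delta_rat φ q⁻¹ r⁻¹ x y, norm_smul, norm_mul, norm_ratCast_complex,
      norm_ratCast_complex] at hle
    push_cast at hle
    rw [abs_of_pos (by positivity), abs_of_pos (by positivity)] at hle
    have h2 : ‖φ (x * y) - φ x * φ y‖
        = ((q:ℝ) * (r:ℝ)) * ((q:ℝ)⁻¹ * (r:ℝ)⁻¹ * ‖φ (x * y) - φ x * φ y‖) := by
      field_simp
    rw [h2]
    calc ((q:ℝ) * (r:ℝ)) * ((q:ℝ)⁻¹ * (r:ℝ)⁻¹ * ‖φ (x * y) - φ x * φ y‖)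
        ≤ ((q:ℝ) * (r:ℝ)) * mulDefect φ := by
          apply mul_le_mul_of_nonneg_left _ (by positivity)
          exact hle
      _ = mulDefect φ * ((q:ℝ) * (r:ℝ)) := mul_comm _ _
  have h5 : ∀ ε ∈ Set.Ioi (0:ℝ),
      ‖φ (x * y) - φ x * φ y‖ ≤ mulDefect φ * ((‖x‖ + ε) * (‖y‖ + ε)) := by
    intro ε hε
    simp only [Set.mem_Ioi] at hε
    obtain ⟨q, hq1, hq2⟩ := exists_rat_btwn (show ‖x‖ < ‖x‖ + ε by linarith)
    obtain ⟨r, hr1, hr2⟩ := exists_rat_btwn (show ‖y‖ < ‖y‖ + ε by linarith)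
    refine le_trans (key q r hq1 hr1) ?_
    apply mul_le_mul_of_nonneg_left _ (mulDefect_nonneg φ)
    nlinarith [norm_nonneg x, norm_nonneg y]
  have htend : Filter.Tendsto (fun ε : ℝ => mulDefect φ * ((‖x‖ + ε) * (‖y‖ + ε)))
      (nhdsWithin 0 (Set.Ioi 0)) (nhds (mulDefect φ * (‖x‖ * ‖y‖))) := by
    have hc : ContinuousAt (fun ε : ℝ => mulDefect φ * ((‖x‖ + ε) * (‖y‖ + ε))) 0 := by
      fun_prop
    have := hc.tendsto.mono_left (nhdsWithin_le_nhds (s := Set.Ioi (0:ℝ)))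
    simpa using this
  exact ge_of_tendsto htend (Filter.eventually_of_mem self_mem_nhdsWithin h5)

end Defect


theorem stmt13 {A B : Type*} [NonUnitalNormedRing A] [NormedSpace ℂ A] [CompleteSpace A]
    [NonUnitalNormedRing B] [NormedSpace ℂ B] [CompleteSpace B]
    (φ : A →L[ℂ] B) (n : ℕ) (hn : 1 ≤ n)
    (ψ : ContinuousMultilinearMap ℂ (fun _ : Fin n => A) B)
    (a : Fin (n + 2) → A) :
    ‖cob φ (n + 1) (cob φ n ⇑ψ) a‖ ≤ 4 * mulDefect φ * ‖ψ‖ * ∏ i, ‖a i‖ := by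
  rw [cob_cob a φ ⇑ψ]
  refine le_trans (norm_sub_le _ _) ?_
  have e1 : ‖ψ (Fin.init (Fin.init a)) *
        (φ (a (Fin.last n).castSucc * a (Fin.last (n + 1)))
          - φ (a (Fin.last n).castSucc) * φ (a (Fin.last (n + 1))))‖
      ≤ (‖ψ‖ * ∏ i : Fin n, ‖a (Fin.castSucc (Fin.castSucc i))‖)
        * (mulDefect φ * (‖a (Fin.last n).castSucc‖ * ‖a (Fin.last (n + 1))‖)) := by
    refine le_trans (norm_mul_le _ _)
      (mul_le_mul ?_ (defect_le φ _ _) (norm_nonneg _) (by positivity))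
    calc ‖ψ (Fin.init (Fin.init a))‖ ≤ ‖ψ‖ * ∏ i, ‖Fin.init (Fin.init a) i‖ :=
          ψ.le_opNorm _
      _ = ‖ψ‖ * ∏ i : Fin n, ‖a (Fin.castSucc (Fin.castSucc i))‖ := by
          congr 1
  have e2 : ‖(φ (a 0 * a 1) - φ (a 0) * φ (a 1)) * ψ (Fin.tail (Fin.tail a))‖
      ≤ (mulDefect φ * (‖a 0‖ * ‖a 1‖)) * (‖ψ‖ * ∏ i : Fin n, ‖a i.succ.succ‖) := by
    refine le_trans (norm_mul_le _ _)
      (mul_le_mul (defect_le φ _ _) ?_ (norm_nonneg _)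
        (mul_nonneg (mulDefect_nonneg φ) (by positivity)))
    calc ‖ψ (Fin.tail (Fin.tail a))‖ ≤ ‖ψ‖ * ∏ i, ‖Fin.tail (Fin.tail a) i‖ :=
          ψ.le_opNorm _
      _ = ‖ψ‖ * ∏ i : Fin n, ‖a i.succ.succ‖ := by congr 1
  refine le_trans (add_le_add e1 e2) ?_
  have hprod1 : ∏ i, ‖a i‖ = (∏ i : Fin n, ‖a (Fin.castSucc (Fin.castSucc i))‖)
      * ‖a (Fin.last n).castSucc‖ * ‖a (Fin.last (n + 1))‖ := by
    rw [Fin.prod_univ_castSucc (f := fun i => ‖a i‖),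
      Fin.prod_univ_castSucc (f := fun i : Fin (n + 1) => ‖a i.castSucc‖)]
  have hprod2 : ∏ i, ‖a i‖ = ‖a 0‖ * (‖a 1‖ * ∏ i : Fin n, ‖a i.succ.succ‖) := by
    rw [Fin.prod_univ_succ (f := fun i => ‖a i‖),
      Fin.prod_univ_succ (f := fun i : Fin (n + 1) => ‖a i.succ‖),
      show a (Fin.succ 0) = a 1 from congrArg a (Fin.ext (by simp))]
  have key1 : (‖ψ‖ * ∏ i : Fin n, ‖a (Fin.castSucc (Fin.castSucc i))‖)
      * (mulDefect φ * (‖a (Fin.last n).castSucc‖ * ‖a (Fin.last (n + 1))‖))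
      = mulDefect φ * ‖ψ‖ * ∏ i, ‖a i‖ := by rw [hprod1]; ring
  have key2 : (mulDefect φ * (‖a 0‖ * ‖a 1‖)) * (‖ψ‖ * ∏ i : Fin n, ‖a i.succ.succ‖)
      = mulDefect φ * ‖ψ‖ * ∏ i, ‖a i‖ := by rw [hprod2]; ring
  rw [key1, key2]
  have hpos : 0 ≤ mulDefect φ * ‖ψ‖ * ∏ i, ‖a i‖ :=
    mul_nonneg (mul_nonneg (mulDefect_nonneg φ) (norm_nonneg _))
      (Finset.prod_nonneg fun i _ => norm_nonneg _)
  nlinarith [hpos]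
end

section
/- Let M = {m₁ < m₂ < ⋯} be an infinite subset of ℕ with m₁ = 1 and m_{j+1} ≤ 2m_j + 2 for all j ∈ ℕ. Then every nonempty interval J in ℕ∖M (i.e. a set of the form [a,b] ∩ ℕ disjoint from M) is a Schreier set, meaning |J| ≤ min J. -/
theorem stmt16 (m : ℕ → ℕ) (hmono : StrictMono m) (h1 : m 0 = 1)
    (hgrow : ∀ j, m (j + 1) ≤ 2 * m j + 2)
    (a b : ℝ) (ha : 1 ≤ a) (hab : a < b)
    (J : Set ℕ) (hJ : J = {n : ℕ | a ≤ (n : ℝ) ∧ (n : ℝ) ≤ b})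
    (hdisj : ∀ n ∈ J, n ∉ Set.range m) (hne : J.Nonempty) :
    J.Finite ∧ ∀ n ∈ J, J.ncard ≤ n := by
  have hb0 : (0:ℝ) ≤ b := by linarith
  set α := ⌈a⌉₊ with hαdef
  set β := ⌊b⌋₊ with hβdef
  have hJeq : J = ↑(Finset.Icc α β) := by
    rw [hJ]
    ext n
    simp only [Finset.coe_Icc, Set.mem_Icc, Set.mem_setOf_eq]
    rw [hαdef, hβdef, Nat.ceil_le, Nat.le_floor_iff hb0]
  have hα2 : 2 ≤ α := by
    by_contra h
    push_neg at h
    have ha1 : a ≤ 1 := by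
      have : α ≤ 1 := by omega
      exact_mod_cast (Nat.ceil_le.mp this).trans (by norm_num)
    have h1J : (1:ℕ) ∈ J := by
      rw [hJ]
      constructor
      · push_cast; linarith
      · push_cast; linarith
    exact hdisj 1 h1J ⟨0, h1⟩
  set j := Nat.findGreatest (fun j => m j < α) α with hjdef
  have hspec : m j < α :=
    Nat.findGreatest_spec (P := fun j => m j < α) (Nat.zero_le α) (by omega)
  have hjα : j < α := lt_of_le_of_lt hmono.le_apply hspec
  have hj1 : α ≤ m (j + 1) := by
    have := Nat.findGreatest_is_greatest (P := fun j => m j < α)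
      (Nat.lt_succ_self j) (by omega)
    simp only [Nat.succ_eq_add_one] at this
    omega
  have hnotJ : m (j + 1) ∉ J := fun h => hdisj _ h ⟨j + 1, rfl⟩
  have hbig : β < m (j + 1) := by
    rw [hJ] at hnotJ
    simp only [Set.mem_setOf_eq, not_and, not_le] at hnotJ
    have haux : a ≤ (m (j + 1) : ℝ) := by
      calc a ≤ (α : ℝ) := Nat.le_ceil a
        _ ≤ (m (j + 1) : ℝ) := by exact_mod_cast hj1
    have hblt : b < (m (j + 1) : ℝ) := hnotJ haux
    have : (β : ℝ) ≤ b := Nat.floor_le hb0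
    exact_mod_cast this.trans_lt hblt
  have hcard : β + 1 ≤ 2 * α := by
    have := hgrow j
    omega
  have hfin : J.Finite := hJeq ▸ (Finset.Icc α β).finite_toSet
  refine ⟨hfin, fun n hn => ?_⟩
  have hncard : J.ncard = β + 1 - α := by
    rw [hJeq, Set.ncard_coe_finset, Nat.card_Icc]
  have hnα : α ≤ n := by
    rw [hJeq] at hn
    simp only [Finset.coe_Icc, Set.mem_Icc] at hn
    exact hn.1
  omega
end
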